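/- Let L be a line bundle of degree d ≥ 2g+3 on a projective integral curve C of arithmetic genus g, defining a linearly normal embedding C₀ ⊂ P^{d−g}, and let p₁, p₂ be distinct smooth points of C. Let S₁ = Join(p₁, C₀), S₂ = Join(p₂, C₀), and T = Join(L̄, C₀) where L̄ is the line through p₁, p₂. Then I(S₁)₂ ∩ I(S₂)₂ = I(T)₂, i.e., a quadric containing both cones S₁ and S₂ contains the join T. -/

import Mathlib

/-!
A point of `T` has the form `a v₁ + b v₂ + y` with `y` on the cone over `C₀`. By polarization,
the value of a quadric at a sum of three vectors is determined by its values at the three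
summands and at the three pairwise sums, and each of these six points lies on `S₁` or on `S₂`.
-/

open MvPolynomial Matrix Module

/-- The symmetric matrix associated to a quadratic form written as a polynomial
(characteristic ≠ 2). -/
noncomputable def quadMatrix {k : Type*} [Field k] {n : ℕ}
    (Q : MvPolynomial (Fin n) k) : Matrix (Fin n) (Fin n) k :=
  fun i j => if i = j then MvPolynomial.coeff (Finsupp.single i 2) Q
    else MvPolynomial.coeff (Finsupp.single i 1 + Finsupp.single j 1) Q / 2

/-- An ideal is generated by quadrics of rank at most 3. -/
def GenByRank3Quadrics {k : Type*} [Field k] {n : ℕ}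
    (I : Ideal (MvPolynomial (Fin n) k)) : Prop :=
  ∃ S : Set (MvPolynomial (Fin n) k),
    (∀ Q ∈ S, Q.IsHomogeneous 2 ∧ (quadMatrix Q).rank ≤ 3) ∧ Ideal.span S = I

/-- The Hilbert function of the homogeneous coordinate ring `k[x]/I`. -/
noncomputable def hilbFn {k : Type*} [Field k] {n : ℕ}
    (I : Ideal (MvPolynomial (Fin n) k)) (m : ℕ) : ℕ :=
  Module.finrank k ((MvPolynomial.homogeneousSubmodule (Fin n) k m).map
    (Ideal.Quotient.mkₐ k I).toLinearMap)

/-- Extrinsic description (via the affine cone `X ⊆ k^{r+1}`) of a projectively normal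
integral curve of degree `d` and arithmetic genus `g`, linearly normally embedded in
`ℙ^r` by a complete linear system (`r = d - g`); degree and genus are encoded by the
Hilbert function `m ↦ d·m + 1 - g` of the homogeneous coordinate ring. -/
structure IsPNCurve {k : Type*} [Field k] {r : ℕ} (X : Set (Fin (r + 1) → k))
    (d g : ℕ) : Prop where
  cone : ∀ (c : k), ∀ x ∈ X, c • x ∈ X
  zero_mem : (0 : Fin (r + 1) → k) ∈ X
  closed : X = MvPolynomial.zeroLocus k (MvPolynomial.vanishingIdeal k X)
  integral : (MvPolynomial.vanishingIdeal k X).IsPrime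
  hilb : ∀ m : ℕ, 1 ≤ m → (hilbFn (MvPolynomial.vanishingIdeal k X) m : ℤ) = d * m + 1 - g

/-- `v` is (the affine cone representative of) a smooth point of the curve with affine
cone `X ⊆ k^n`: the gradients at `v` of the polynomials vanishing on `X` span a space
of dimension `n − 2` (the codimension of the 2-dimensional cone). -/
def IsSmoothCurvePoint {k : Type*} [Field k] {n : ℕ} (X : Set (Fin n → k))
    (v : Fin n → k) : Prop :=
  v ∈ X ∧ v ≠ 0 ∧
    Module.finrank k ↥(Submodule.span k
      {w : Fin n → k | ∃ P ∈ MvPolynomial.vanishingIdeal k X,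
        w = fun i => MvPolynomial.eval v (MvPolynomial.pderiv i P)}) = n - 2

namespace Finsupp

theorem exists_eq_single_add_single_of_degree_eq_two {σ : Type*} {e : σ →₀ ℕ}
    (he : e.degree = 2) : ∃ i j, e = single i 1 + single j 1 := by
  classical
  have hcard : (toMultiset e).card = 2 := by rwa [card_toMultiset]
  obtain ⟨i, j, hij⟩ := Multiset.card_eq_two.mp hcard
  refine ⟨i, j, ?_⟩
  rw [← toMultiset_toFinsupp e, hij, Multiset.insert_eq_cons, ← Multiset.singleton_add,
    Multiset.toFinsupp_add, Multiset.toFinsupp_singleton, Multiset.toFinsupp_singleton]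

end Finsupp

namespace MvPolynomial

theorem IsHomogeneous.eval_add_add {σ R : Type*} [CommRing R] {Q : MvPolynomial σ R}
    (hQ : Q.IsHomogeneous 2) (x y z : σ → R) :
    eval (x + y + z) Q + eval x Q + eval y Q + eval z Q
      = eval (x + y) Q + eval (x + z) Q + eval (y + z) Q := by
  conv_lhs => rw [Q.as_sum]
  conv_rhs => rw [Q.as_sum]
  simp only [map_sum, ← Finset.sum_add_distrib]
  refine Finset.sum_congr rfl fun e he => ?_
  obtain ⟨i, j, rfl⟩ := Finsupp.exists_eq_single_add_single_of_degree_eq_two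
    (by rw [Finsupp.degree_eq_weight_one]; exact hQ (mem_support_iff.mp he))
  simp only [eval_monomial, Finsupp.prod_add_index', Finsupp.prod_single_index, pow_zero,
    pow_one, Pi.add_apply, pow_add, implies_true]
  ring

theorem IsHomogeneous.eval_add_add_eq_zero {σ R : Type*} [CommRing R] {Q : MvPolynomial σ R}
    (hQ : Q.IsHomogeneous 2) {A B C : Set (σ → R)} (hA : 0 ∈ A) (hB : 0 ∈ B) (hC : 0 ∈ C)
    (hAB : ∀ a ∈ A, ∀ b ∈ B, eval (a + b) Q = 0) (hAC : ∀ a ∈ A, ∀ c ∈ C, eval (a + c) Q = 0)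
    (hBC : ∀ b ∈ B, ∀ c ∈ C, eval (b + c) Q = 0) :
    ∀ a ∈ A, ∀ b ∈ B, ∀ c ∈ C, eval (a + b + c) Q = 0 := by
  intro a ha b hb c hc
  have ha₀ : eval a Q = 0 := by simpa using hAB a ha 0 hB
  have hb₀ : eval b Q = 0 := by simpa using hBC b hb 0 hC
  have hc₀ : eval c Q = 0 := by simpa using hAC 0 hA c hc
  simpa [ha₀, hb₀, hc₀, hAB a ha b hb, hAC a ha c hc, hBC b hb c hc] using
    hQ.eval_add_add a b c

end MvPolynomial

theorem stmt_11_general (k : Type*) [Field k]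
    (d g : ℕ)
    (X : Set (Fin (d - g + 1) → k)) (hX : IsPNCurve X d g)
    (v₁ v₂ : Fin (d - g + 1) → k)
    (hv₂ : IsSmoothCurvePoint X v₂) :
    (MvPolynomial.homogeneousSubmodule (Fin (d - g + 1)) k 2 ⊓
        Submodule.restrictScalars k (MvPolynomial.vanishingIdeal k
          {w | ∃ a : k, ∃ y ∈ X, w = a • v₁ + y}) ⊓
        Submodule.restrictScalars k (MvPolynomial.vanishingIdeal k
          {w | ∃ a : k, ∃ y ∈ X, w = a • v₂ + y}))
      = (MvPolynomial.homogeneousSubmodule (Fin (d - g + 1)) k 2 ⊓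
          Submodule.restrictScalars k (MvPolynomial.vanishingIdeal k
            {w | ∃ a b : k, ∃ y ∈ X, w = a • v₁ + b • v₂ + y})) := by
  refine le_antisymm ?_ ?_
  · rintro Q ⟨⟨hQ, hS₁⟩, hS₂⟩
    refine ⟨hQ, ?_⟩
    rintro _ ⟨a, b, y, hy, rfl⟩
    -- The line through `v₂` lies in the cone `X`, so `Join(v₁, v₂) ⊆ Join(v₁, X) = S₁`.
    exact hQ.eval_add_add_eq_zero (A := Set.range (· • v₁)) (B := Set.range (· • v₂)) (C := X)
      ⟨0, zero_smul k v₁⟩ ⟨0, zero_smul k v₂⟩ hX.zero_mem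
      (by rintro _ ⟨a, rfl⟩ _ ⟨b, rfl⟩; exact hS₁ _ ⟨a, _, hX.cone b v₂ hv₂.1, rfl⟩)
      (by rintro _ ⟨a, rfl⟩ y hy; exact hS₁ _ ⟨a, y, hy, rfl⟩)
      (by rintro _ ⟨b, rfl⟩ y hy; exact hS₂ _ ⟨b, y, hy, rfl⟩)
      _ ⟨a, rfl⟩ _ ⟨b, rfl⟩ y hy
  · rintro Q ⟨hQ, hT⟩
    refine ⟨⟨hQ, ?_⟩, ?_⟩
    · exact MvPolynomial.vanishingIdeal_anti_mono
        (by rintro _ ⟨a, y, hy, rfl⟩; exact ⟨a, 0, y, hy, by simp⟩) hT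
    · exact MvPolynomial.vanishingIdeal_anti_mono
        (by rintro _ ⟨b, y, hy, rfl⟩; exact ⟨0, b, y, hy, by simp⟩) hT

/-- Let `C₀ ⊆ ℙ^{d−g}` be a linearly normally embedded projectively normal integral
curve of degree `d ≥ 2g + 3` and arithmetic genus `g`, and let `p₁ ≠ p₂` be smooth
points of `C₀` (with affine cone representatives `v₁, v₂`). With
`S₁ = Join(p₁, C₀)`, `S₂ = Join(p₂, C₀)` and `T = Join(L̄, C₀)` for the line `L̄`
through `p₁, p₂` (all given by their affine cones), one has
`I(S₁)₂ ∩ I(S₂)₂ = I(T)₂`. -/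
theorem stmt_11 (k : Type*) [Field k] [IsAlgClosed k] (hchar : ringChar k ≠ 2)
    (d g : ℕ) (hd : 2 * g + 3 ≤ d)
    (X : Set (Fin (d - g + 1) → k)) (hX : IsPNCurve X d g)
    (v₁ v₂ : Fin (d - g + 1) → k)
    (hv₁ : IsSmoothCurvePoint X v₁) (hv₂ : IsSmoothCurvePoint X v₂)
    (hne : ∀ c : k, v₂ ≠ c • v₁) :
    (MvPolynomial.homogeneousSubmodule (Fin (d - g + 1)) k 2 ⊓
        Submodule.restrictScalars k (MvPolynomial.vanishingIdeal k
          {w | ∃ a : k, ∃ y ∈ X, w = a • v₁ + y}) ⊓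
        Submodule.restrictScalars k (MvPolynomial.vanishingIdeal k
          {w | ∃ a : k, ∃ y ∈ X, w = a • v₂ + y}))
      = (MvPolynomial.homogeneousSubmodule (Fin (d - g + 1)) k 2 ⊓
          Submodule.restrictScalars k (MvPolynomial.vanishingIdeal k
            {w | ∃ a b : k, ∃ y ∈ X, w = a • v₁ + b • v₂ + y})) :=
  stmt_11_general k d g X hX v₁ v₂ hv₂
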